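/- arXiv:2007.10199 — 11 statements merged into one kernel-verified Lean document; each statement's English description precedes it below -/
import Mathlib

section
/- For all natural numbers k, i, j one has C(k,i)·C(k,j) = ∑_{m = max(i,j)}^{i+j} C(m,i)·C(i, m−j)·C(k,m). -/
/-!
Trinomial revision `C(k,m) C(m,i) = C(k,i) C(k-i,m-i)` pulls the factor `C(k,i)` out of every
term, and what remains is Vandermonde's convolution for `C(i + (k-i), j)`.
-/

open Finset Nat

namespace Nat

/-- Vandermonde's identity reindexed by `m = i + j - a`; the terms `C(i, a) C(n, j - a)` with
`a > i` vanish, which cuts the range down to `m ≥ max i j`. -/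
theorem add_choose_eq_sum_Icc (i n j : ℕ) :
    (i + n).choose j =
      ∑ m ∈ Icc (max i j) (i + j), i.choose (m - j) * n.choose (m - i) := by
  have vanishing : ∀ a ∈ range (j + 1), a ∉ range (min i j + 1) →
      i.choose a * n.choose (j - a) = 0 := fun a ha ha' => by
    simp only [mem_range] at ha ha'
    rw [choose_eq_zero_of_lt (by omega : i < a), zero_mul]
  rw [add_choose_eq, Finset.Nat.sum_antidiagonal_eq_sum_range_succ_mk,
    ← sum_subset (by intro a; simp only [mem_range]; omega) vanishing]
  refine sum_nbij' (fun a => i + j - a) (fun m => i + j - m) ?_ ?_ ?_ ?_ ?_ <;>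
    intro a ha <;> simp only [mem_range, mem_Icc] at ha ⊢
  · omega
  · omega
  · omega
  · omega
  · rw [show i + j - a - j = i - a by omega, show i + j - a - i = j - a by omega,
      choose_symm (by omega)]

end Nat

/-- Riordan's product formula for binomial coefficients:
`C(k,i) * C(k,j) = ∑_{m = max(i,j)}^{i+j} C(m,i) * C(i, m-j) * C(k,m)`. -/
theorem riordan_binomial_product (k i j : ℕ) :
    k.choose i * k.choose j =
      ∑ m ∈ Finset.Icc (max i j) (i + j),
        m.choose i * i.choose (m - j) * k.choose m := by
  rcases lt_or_ge k i with hki | hik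
  · rw [choose_eq_zero_of_lt hki, zero_mul, eq_comm]
    refine sum_eq_zero fun m hm => ?_
    have hkm : k < m := by simp only [mem_Icc] at hm; omega
    rw [choose_eq_zero_of_lt hkm, mul_zero]
  · obtain ⟨n, rfl⟩ := exists_add_of_le hik
    rw [add_choose_eq_sum_Icc i n j, mul_sum]
    refine sum_congr rfl fun m hm => ?_
    have him : i ≤ m := by simp only [mem_Icc] at hm; omega
    rw [show m.choose i * i.choose (m - j) * (i + n).choose m =
        (i + n).choose m * m.choose i * i.choose (m - j) by ring,
      choose_mul him, add_tsub_cancel_left, mul_right_comm, mul_assoc]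
end

section
/- Let F be a field. The family of sequences in ℕ → F indexed by pairs (λ, i), where λ ranges over the nonzero elements of F and i over the natural numbers, given by (λ, i) ↦ (k ↦ C(k,i)·λ^k), is linearly independent over F. -/
open Module

section Aux

variable {F : Type*} [Field F]

/-- The shift operator on sequences. -/
noncomputable def seqShift (F : Type*) [Field F] : Module.End F (ℕ → F) where
  toFun f := fun k => f (k + 1)
  map_add' _ _ := rfl
  map_smul' _ _ := rfl

/-- The binomial–geometric sequence. -/
noncomputable def bgSeq (l : F) (i : ℕ) : ℕ → F := fun k => (k.choose i : F) * l ^ k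

lemma seqShift_sub_apply (l : F) (g : ℕ → F) (k : ℕ) :
    ((seqShift F - l • 1) g) k = g (k + 1) - l * g k := by
  simp [seqShift]

lemma seqShift_sub_bgSeq_zero (l : F) : (seqShift F - l • 1) (bgSeq l 0) = 0 := by
  funext k
  rw [seqShift_sub_apply]
  simp [bgSeq, pow_succ, mul_comm]

lemma seqShift_sub_bgSeq_succ (l : F) (i : ℕ) :
    (seqShift F - l • 1) (bgSeq l (i + 1)) = l • bgSeq l i := by
  funext k
  rw [seqShift_sub_apply]
  simp only [bgSeq, Pi.smul_apply, smul_eq_mul, Nat.choose_succ_succ, Nat.cast_add]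
  ring

lemma seqShift_pow_bgSeq (l : F) (i : ℕ) :
    ((seqShift F - l • 1) ^ (i + 1)) (bgSeq l i) = 0 := by
  induction i with
  | zero => simpa [pow_one] using seqShift_sub_bgSeq_zero l
  | succ n ih =>
      have : ((seqShift F - l • 1) ^ (n + 2)) (bgSeq l (n + 1)) =
          ((seqShift F - l • 1) ^ (n + 1)) ((seqShift F - l • 1) (bgSeq l (n + 1))) := by
        rw [pow_succ, Module.End.mul_apply]
      rw [this, seqShift_sub_bgSeq_succ, map_smul, ih, smul_zero]

lemma bgSeq_mem_genEigenspace (l : F) (i : ℕ) :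
    bgSeq l i ∈ (seqShift F).genEigenspace l ⊤ := by
  rw [Module.End.mem_genEigenspace_top]
  exact ⟨i + 1, by simpa using seqShift_pow_bgSeq l i⟩

lemma choose_sum_eq_zero : ∀ (s : Finset ℕ) (g : ℕ → F),
    (∀ k : ℕ, ∑ i ∈ s, g i * (k.choose i : F) = 0) → ∀ i ∈ s, g i = 0 := by
  intro s
  induction s using Finset.strongInduction with
  | _ s ih =>
    intro g hg i hi
    have hne : s.Nonempty := ⟨i, hi⟩
    set m := s.min' hne with hm_def
    have hmmem : m ∈ s := s.min'_mem hne
    have hgm : g m = 0 := by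
      have h := hg m
      rw [Finset.sum_eq_single m] at h
      · simpa using h
      · intro j hj hjm
        have : m < j := lt_of_le_of_ne (s.min'_le j hj) (Ne.symm hjm)
        rw [Nat.choose_eq_zero_of_lt this]
        simp
      · intro h'; exact absurd hmmem h'
    rcases eq_or_ne i m with rfl | him
    · exact hgm
    · refine ih (s.erase m) (Finset.erase_ssubset hmmem) g ?_ i
        (Finset.mem_erase.mpr ⟨him, hi⟩)
      intro k
      have h := hg k
      rw [← Finset.add_sum_erase _ _ hmmem, hgm] at h
      simpa using h

lemma bgSeq_indep_fixed (l : F) (hl : l ≠ 0) : LinearIndependent F (bgSeq l) := by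
  rw [linearIndependent_iff']
  intro s g hsum i hi
  refine choose_sum_eq_zero s g ?_ i hi
  intro k
  have h := congrFun hsum k
  simp only [Finset.sum_apply, Pi.smul_apply, bgSeq, smul_eq_mul, Pi.zero_apply] at h
  have h2 : (∑ i ∈ s, g i * (k.choose i : F)) * l ^ k = 0 := by
    rw [Finset.sum_mul]
    simpa [mul_assoc] using h
  exact (mul_eq_zero.mp h2).resolve_right (pow_ne_zero k hl)

end Aux

/-- The family of sequences `k ↦ C(k,i) * λ^k`, indexed by pairs `(λ, i)` with `λ` a nonzero
element of the field `F` and `i : ℕ`, is linearly independent over `F`. -/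
theorem linearIndependent_binomial_geometric (F : Type*) [Field F] :
    LinearIndependent F
      (fun p : {x : F // x ≠ 0} × ℕ => fun k : ℕ => (k.choose p.2 : F) * (p.1 : F) ^ k) := by
  have hspan : ∀ l : {x : F // x ≠ 0},
      Submodule.span F (Set.range (bgSeq (l : F))) ≤ (seqShift F).genEigenspace (l : F) ⊤ := by
    intro l
    rw [Submodule.span_le]
    rintro _ ⟨i, rfl⟩
    exact bgSeq_mem_genEigenspace (l : F) i
  have hsig : LinearIndependent F
      (fun ji : Σ _ : {x : F // x ≠ 0}, ℕ => bgSeq (ji.1 : F) ji.2) := by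
    apply linearIndependent_iUnion_finite
      (f := fun (l : {x : F // x ≠ 0}) (i : ℕ) => bgSeq (l : F) i)
    · intro l; exact bgSeq_indep_fixed (l : F) l.2
    · intro l t _ hlt
      have hE : iSupIndep ((seqShift F).genEigenspace · ⊤) :=
        Module.End.independent_genEigenspace (seqShift F) ⊤
      have hx : (l : F) ∉ Subtype.val '' t := by
        rintro ⟨m, hm, hml⟩
        exact hlt (by rwa [Subtype.val_injective hml] at hm)
      have hd := hE.disjoint_biSup (y := Subtype.val '' t) hx
      refine Disjoint.mono (hspan l) ?_ hd
      refine iSup₂_le fun m hm => ?_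
      exact le_trans (hspan m) (le_iSup₂ (f := fun v _ => (seqShift F).genEigenspace v ⊤)
        (m : F) ⟨m, hm, rfl⟩)
  exact hsig.comp (Equiv.sigmaEquivProd {x : F // x ≠ 0} ℕ).symm
    (Equiv.sigmaEquivProd {x : F // x ≠ 0} ℕ).symm.injective
end

section
/- Let F be a field. The family of sequences in ℕ → F consisting of (a) the delta sequences δ_n for n ∈ ℕ, where δ_n(k) = 1 if k = n and 0 otherwise, and (b) the sequences k ↦ C(k,i)·λ^k for each nonzero λ ∈ F and each i ∈ ℕ, is linearly independent over F. -/
open Filter Submodule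

namespace DeltaBinomAux

variable {F : Type*} [Field F]

/-- Sequences modulo eventual equality. -/
local notation "Gm" => Filter.Germ (atTop : Filter ℕ) F

/-- The germ map, as a linear map. -/
def toGerm (F : Type*) [Field F] : (ℕ → F) →ₗ[F] Filter.Germ (atTop : Filter ℕ) F where
  toFun f := ↑f
  map_add' f g := rfl
  map_smul' c f := rfl

/-- The shift operator on germs. -/
def shiftL (F : Type*) [Field F] :
    Filter.Germ (atTop : Filter ℕ) F →ₗ[F] Filter.Germ (atTop : Filter ℕ) F where
  toFun g := g.compTendsto (· + 1) (tendsto_add_atTop_nat 1)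
  map_add' a b := by
    refine Filter.Germ.inductionOn₂ a b fun f g => ?_
    simp only [← Filter.Germ.coe_add, Filter.Germ.coe_compTendsto]
    rfl
  map_smul' c a := by
    refine Filter.Germ.inductionOn a fun f => ?_
    simp only [← Filter.Germ.coe_smul, Filter.Germ.coe_compTendsto, RingHom.id_apply]
    rfl

abbrev sq (lam : F) (i : ℕ) : ℕ → F := fun k : ℕ => (k.choose i : F) * lam ^ k

def g (lam : F) (i : ℕ) : Filter.Germ (atTop : Filter ℕ) F := ↑(sq lam i)

def D (lam : F) : Module.End F (Filter.Germ (atTop : Filter ℕ) F) := shiftL F - lam • 1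

lemma shift_g (lam : F) (i : ℕ) : shiftL F (g lam i) = ↑(sq lam i ∘ (· + 1)) :=
  Filter.Germ.coe_compTendsto (sq lam i) (tendsto_add_atTop_nat 1)

lemma D_g_zero (lam : F) : D lam (g lam 0) = 0 := by
  have h : sq lam 0 ∘ (· + 1) = lam • sq lam 0 := by
    funext k; simp [sq, pow_succ, mul_comm]
  show shiftL F (g lam 0) - lam • g lam 0 = 0
  rw [shift_g, h, g, Filter.Germ.coe_smul, sub_self]

lemma D_g_succ (lam : F) (i : ℕ) : D lam (g lam (i + 1)) = lam • g lam i := by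
  have h : sq lam (i + 1) ∘ (· + 1) = lam • sq lam (i + 1) + lam • sq lam i := by
    funext k
    simp only [sq, Function.comp_apply, Pi.add_apply, Pi.smul_apply, smul_eq_mul,
      Nat.choose_succ_succ, Nat.cast_add, pow_succ]
    ring
  show shiftL F (g lam (i + 1)) - lam • g lam (i + 1) = lam • g lam i
  rw [shift_g, h, g, g, Filter.Germ.coe_add, Filter.Germ.coe_smul, Filter.Germ.coe_smul]
  abel

lemma D_pow (lam : F) (j i : ℕ) :
    ((D lam) ^ j) (g lam i) = if j ≤ i then lam ^ j • g lam (i - j) else 0 := by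
  induction j generalizing i with
  | zero => simp
  | succ j ih =>
    rw [pow_succ, Module.End.mul_apply]
    cases i with
    | zero => rw [D_g_zero, map_zero, if_neg (Nat.not_succ_le_zero j)]
    | succ i =>
      rw [D_g_succ, map_smul, ih]
      by_cases h : j ≤ i
      · rw [if_pos h, if_pos (by omega), smul_smul, pow_succ', Nat.succ_sub_succ]
      · rw [if_neg h, if_neg (by omega), smul_zero]

lemma g_zero_ne (lam : F) (hlam : lam ≠ 0) : g lam 0 ≠ 0 := by
  intro h
  have h' : sq lam 0 =ᶠ[atTop] (0 : ℕ → F) := by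
    rw [← Filter.Germ.coe_eq]; exact h
  obtain ⟨N, hN⟩ := eventually_atTop.1 h'
  have := hN N le_rfl
  simp [sq] at this
  exact hlam this.1

lemma g_mem (lam : F) (i : ℕ) : g lam i ∈ Module.End.genEigenspace (shiftL F) lam ⊤ := by
  rw [Module.End.mem_genEigenspace_top]
  refine ⟨i + 1, ?_⟩
  rw [LinearMap.mem_ker]
  have : (D lam) ^ (i + 1) = ((shiftL F - lam • 1) ^ (i + 1)) := rfl
  rw [← this, D_pow, if_neg (by omega)]

lemma chain_indep (lam : F) (hlam : lam ≠ 0) : LinearIndependent F (g lam) := by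
  rw [linearIndependent_iff']
  intro s
  induction s using Finset.strongInduction with
  | _ s ih =>
    intro c hsum i hi
    classical
    have hne : s.Nonempty := ⟨i, hi⟩
    set m := s.max' hne with hm_def
    have hm : m ∈ s := s.max'_mem hne
    have h1 : ((D lam) ^ m) (∑ j ∈ s, c j • g lam j) = 0 := by rw [hsum, map_zero]
    rw [map_sum] at h1
    have h2 : ∀ j ∈ s, ((D lam) ^ m) (c j • g lam j) =
        if m = j then (c m * lam ^ m) • g lam 0 else 0 := by
      intro j hj
      rcases eq_or_ne j m with rfl | hjm
      · rw [if_pos rfl, map_smul, D_pow, if_pos le_rfl, Nat.sub_self, smul_smul]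
      · have hlt : j < m := lt_of_le_of_ne (s.le_max' j hj) hjm
        rw [if_neg (by omega), map_smul, D_pow, if_neg (by omega), smul_zero]
    rw [Finset.sum_congr rfl h2, Finset.sum_ite_eq, if_pos hm] at h1
    have hcm : c m = 0 := by
      rcases smul_eq_zero.1 h1 with h | h
      · rcases mul_eq_zero.1 h with h | h
        · exact h
        · exact absurd h (pow_ne_zero m hlam)
      · exact absurd h (g_zero_ne lam hlam)
    have hsum' : ∑ j ∈ s.erase m, c j • g lam j = 0 := by
      rw [← Finset.add_sum_erase s _ hm, hcm, zero_smul, zero_add] at hsum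
      exact hsum
    rcases eq_or_ne i m with rfl | hne2
    · exact hcm
    · exact ih (s.erase m) (Finset.erase_ssubset hm) c hsum' i (Finset.mem_erase.2 ⟨hne2, hi⟩)

lemma germ_indep_sigma :
    LinearIndependent F (fun ji : Σ _ : {x : F // x ≠ 0}, ℕ => g (ji.1 : F) ji.2) := by
  apply linearIndependent_iUnion_finite (f := fun lam : {x : F // x ≠ 0} => g (lam : F))
  · exact fun lam => chain_indep (lam : F) lam.2
  · intro lam t _ hnot
    refine Disjoint.mono ?_ ?_
      ((Module.End.independent_genEigenspace (shiftL F) ⊤).disjoint_biSup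
        (x := (lam : F)) (y := Subtype.val '' t) ?_)
    · rw [Submodule.span_le]
      rintro _ ⟨i, rfl⟩
      exact g_mem (lam : F) i
    · refine iSup₂_le fun mu hmu => ?_
      refine le_trans ?_ (le_biSup _ ⟨mu, hmu, rfl⟩)
      rw [Submodule.span_le]
      rintro _ ⟨i, rfl⟩
      exact g_mem (mu : F) i
    · rintro ⟨mu, hmu, heq⟩
      exact hnot (by rwa [Subtype.val_injective heq] at hmu)

lemma germ_indep_prod :
    LinearIndependent F (fun p : {x : F // x ≠ 0} × ℕ => g (p.1 : F) p.2) :=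
  germ_indep_sigma.comp (Equiv.sigmaEquivProd {x : F // x ≠ 0} ℕ).symm
    (Equiv.sigmaEquivProd {x : F // x ≠ 0} ℕ).symm.injective

abbrev delta (n : ℕ) : ℕ → F := fun k : ℕ => if k = n then (1 : F) else 0

lemma delta_indep : LinearIndependent F (delta (F := F)) := by
  rw [linearIndependent_iff']
  intro s c hsum i hi
  classical
  have h := congrFun hsum i
  simp only [Finset.sum_apply, Pi.smul_apply, delta, smul_eq_mul, mul_ite, mul_one, mul_zero,
    Pi.zero_apply] at h
  rwa [Finset.sum_ite_eq, if_pos hi] at h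

lemma toGerm_delta (n : ℕ) : toGerm F (delta n) = 0 := by
  show (↑(delta (F := F) n) : Gm) = ↑(0 : ℕ → F)
  rw [Filter.Germ.coe_eq]
  filter_upwards [eventually_gt_atTop n] with k hk
  simp [delta, Nat.ne_of_gt hk]

lemma toGerm_sq (p : {x : F // x ≠ 0} × ℕ) : toGerm F (sq (p.1 : F) p.2) = g (p.1 : F) p.2 := rfl

lemma binom_indep : LinearIndependent F (fun p : {x : F // x ≠ 0} × ℕ => sq (p.1 : F) p.2) := by
  apply LinearIndependent.of_comp (toGerm F)
  have h : (⇑(toGerm F) ∘ fun p : {x : F // x ≠ 0} × ℕ => sq (p.1 : F) p.2) =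
      fun p : {x : F // x ≠ 0} × ℕ => g (p.1 : F) p.2 := by funext p; rfl
  rw [h]
  exact germ_indep_prod

set_option maxHeartbeats 1000000 in
lemma disj : Disjoint (span F (Set.range (delta (F := F))))
    (span F (Set.range (fun p : {x : F // x ≠ 0} × ℕ => sq (p.1 : F) p.2))) := by
  rw [Submodule.disjoint_def]
  intro x hx hx'
  have hker : toGerm F x = 0 := by
    have hle : span F (Set.range (delta (F := F))) ≤ LinearMap.ker (toGerm F) :=
      Submodule.span_le.2 (by rintro _ ⟨n, rfl⟩; exact toGerm_delta n)
    exact hle hx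
  obtain ⟨c, hc⟩ := Finsupp.mem_span_range_iff_exists_finsupp.1 hx'
  have h0 : Finsupp.linearCombination F (fun p : {x : F // x ≠ 0} × ℕ => g (p.1 : F) p.2) c = 0 := by
    rw [Finsupp.linearCombination_apply]
    have : (c.sum fun p a => a • g (p.1 : F) p.2) =
        toGerm F (c.sum fun p a => a • sq (p.1 : F) p.2) := by
      rw [map_finsuppSum]
      exact Finsupp.sum_congr fun p _ => by rw [map_smul, toGerm_sq]
    rw [this, hc, hker]
  have hc0 : c = 0 := linearIndependent_iff.1 (germ_indep_prod (F := F)) c h0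
  rw [← hc, hc0, Finsupp.sum_zero_index]

end DeltaBinomAux

/-- The family consisting of the delta sequences `δ_n` together with the sequences
`k ↦ C(k,i) * λ^k` (for nonzero `λ ∈ F` and `i : ℕ`) is linearly independent over `F`. -/
theorem linearIndependent_delta_and_binomial_geometric (F : Type*) [Field F] :
    LinearIndependent F
      (Sum.elim
        (fun n : ℕ => fun k : ℕ => if k = n then (1 : F) else 0)
        (fun p : {x : F // x ≠ 0} × ℕ => fun k : ℕ => (k.choose p.2 : F) * (p.1 : F) ^ k)) := by
  exact LinearIndependent.sum_type DeltaBinomAux.delta_indep DeltaBinomAux.binom_indep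
    DeltaBinomAux.disj
end

section
/- Let (λ_1,…,λ_p; π_0,π_1,…,π_p) be a spectral system for A. Suppose t_0 ∈ ℕ satisfies A^{t_0}·π_0 = 0 and s ∈ ℕ satisfies (A − λ_j·1)^{s+1}·π_j = 0 for every j = 1,…,p. Then for every natural number k: A^k = (A^k·π_0 if k < t_0, and 0 otherwise) + ∑_{j=1}^{p} ∑_{i=0}^{s} C(k,i)·λ_j^k·(λ_j⁻¹)^i · (A − λ_j·1)^i · π_j. -/
open Finset

/-- Expansion of the powers of a matrix along a spectral system: for every `k`,
`A^k` is the sum of its non-geometric part (supported on `k < t₀`) and its geometric part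
`∑_j ∑_i C(k,i) λ_j^k λ_j^{-i} (A - λ_j)^i π_j`. -/
theorem pow_eq_spectral_expansion
    (F : Type*) [Field F] (n : Type*) [Fintype n] [DecidableEq n] [Nonempty n]
    (A : Matrix n n F) (p : ℕ)
    (lam : Fin p → F) (π : Fin (p + 1) → Matrix n n F)
    (hlam : ∀ j, lam j ≠ 0)
    (hsum : ∑ a, π a = 1)
    (horth : ∀ a b, a ≠ b → π a * π b = 0)
    (hidem : ∀ a, π a * π a = π a)
    (hcomm : ∀ a, A * π a = π a * A)
    (t₀ : ℕ) (ht₀ : A ^ t₀ * π 0 = 0)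
    (s : ℕ) (hs : ∀ j : Fin p, (A - lam j • 1) ^ (s + 1) * π j.succ = 0) :
    ∀ k : ℕ,
      A ^ k = (if k < t₀ then A ^ k * π 0 else 0) +
        ∑ j : Fin p, ∑ i ∈ Finset.range (s + 1),
          ((k.choose i : F) * lam j ^ k * (lam j)⁻¹ ^ i) •
            ((A - lam j • 1) ^ i * π j.succ) := by
  intro k
  have h1 : A ^ k = ∑ a, A ^ k * π a := by
    rw [← Finset.mul_sum, hsum, mul_one]
  conv_lhs => rw [h1, Fin.sum_univ_succ]
  congr 1
  · split_ifs with h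
    · rfl
    · have hk : A ^ k = A ^ (k - t₀) * A ^ t₀ := by rw [← pow_add]; congr 1; omega
      rw [hk, mul_assoc, ht₀, mul_zero]
  · apply Finset.sum_congr rfl
    intro j _
    set B := A - lam j • 1 with hB
    have hcommB : Commute B (lam j • 1) := (Commute.one_right B).smul_right _
    have hA : A = B + lam j • 1 := by rw [hB]; abel
    have hπB : ∀ i, B ^ i * π j.succ = π j.succ * B ^ i := by
      intro i
      have : Commute B (π j.succ) := by
        apply Commute.sub_left (hcomm j.succ)
        exact ((Commute.one_left (π j.succ)).smul_left _)
      exact (this.pow_left i).eq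
    have hBzero : ∀ i, s + 1 ≤ i → B ^ i * π j.succ = 0 := by
      intro i hi
      have : B ^ i = B ^ (i - (s+1)) * B ^ (s+1) := by rw [← pow_add]; congr 1; omega
      rw [this, mul_assoc, hs j, mul_zero]
    have expand : A ^ k * π j.succ =
        ∑ i ∈ Finset.range (k + 1),
          ((k.choose i : F) * lam j ^ (k - i)) • (B ^ i * π j.succ) := by
      conv_lhs => rw [hA, hcommB.add_pow]
      rw [Finset.sum_mul]
      apply Finset.sum_congr rfl
      intro i _
      have hc : ((k.choose i : ℕ) : Matrix n n F) = (k.choose i : F) • 1 := by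
        rw [← map_natCast (algebraMap F (Matrix n n F)), Algebra.algebraMap_eq_smul_one]
      rw [hc, smul_pow, one_pow]
      simp only [mul_smul_comm, smul_mul_assoc, mul_one, smul_smul]
      try rw [mul_comm]
    rw [expand]
    -- extend both sums to range (k + s + 1)
    have hsub1 : Finset.range (k + 1) ⊆ Finset.range (k + s + 1) := by
      apply Finset.range_subset_range.mpr; omega
    have hsub2 : Finset.range (s + 1) ⊆ Finset.range (k + s + 1) := by
      apply Finset.range_subset_range.mpr; omega
    have e1 : ∑ i ∈ Finset.range (k + 1),
        ((k.choose i : F) * lam j ^ (k - i)) • (B ^ i * π j.succ) =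
        ∑ i ∈ Finset.range (k + s + 1),
        ((k.choose i : F) * lam j ^ (k - i)) • (B ^ i * π j.succ) := by
      apply Finset.sum_subset hsub1
      intro i _ hi
      simp only [Finset.mem_range, not_lt] at hi
      have : (k.choose i : F) = 0 := by
        rw [Nat.choose_eq_zero_of_lt (by omega)]; simp
      rw [this]; simp
    have e2 : ∑ i ∈ Finset.range (s + 1),
        ((k.choose i : F) * lam j ^ k * (lam j)⁻¹ ^ i) • (B ^ i * π j.succ) =
        ∑ i ∈ Finset.range (k + s + 1),
        ((k.choose i : F) * lam j ^ k * (lam j)⁻¹ ^ i) • (B ^ i * π j.succ) := by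
      apply Finset.sum_subset hsub2
      intro i _ hi
      simp only [Finset.mem_range, not_lt] at hi
      rw [hBzero i (by omega), smul_zero]
    rw [e1, e2]
    apply Finset.sum_congr rfl
    intro i hi
    rcases le_or_gt i k with hik | hik
    · rcases le_or_gt i s with his | his
      · congr 1
        rw [pow_sub₀ (lam j) (hlam j) hik, ← inv_pow]
        ring
      · rw [hBzero i (by omega), smul_zero, smul_zero]
    · have : (k.choose i : F) = 0 := by
        rw [Nat.choose_eq_zero_of_lt hik]; simp
      rw [this]; simp
end

section
/- Let (λ_1,…,λ_p; π_0,π_1,…,π_p) be a spectral system for A with p ≥ 1, and for each j = 1,…,p let t_j ≥ 1 be such that (A − λ_j·1)^{t_j}·π_j = 0 and (A − λ_j·1)^{t_j−1}·π_j ≠ 0. Then for every natural number i, the matrix ∑_{j=1}^{p} (λ_j⁻¹)^i · (A − λ_j·1)^i · π_j equals 0 if and only if t_j ≤ i for every j = 1,…,p. -/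
open Finset

/-- Vanishing criterion for the coefficients of the `P`-canonical form: the coefficient
`∑_j λ_j^{-i} (A - λ_j)^i π_j` vanishes iff `i` is at least every nilpotency index `t_j`. -/
theorem spectral_coefficient_eq_zero_iff
    (F : Type*) [Field F] (n : Type*) [Fintype n] [DecidableEq n] [Nonempty n]
    (A : Matrix n n F) (p : ℕ) (hp : 1 ≤ p)
    (lam : Fin p → F) (π : Fin (p + 1) → Matrix n n F)
    (hlam : ∀ j, lam j ≠ 0)
    (hsum : ∑ a, π a = 1)
    (horth : ∀ a b, a ≠ b → π a * π b = 0)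
    (hidem : ∀ a, π a * π a = π a)
    (hcomm : ∀ a, A * π a = π a * A)
    (t : Fin p → ℕ) (ht1 : ∀ j, 1 ≤ t j)
    (htz : ∀ j : Fin p, (A - lam j • 1) ^ (t j) * π j.succ = 0)
    (htnz : ∀ j : Fin p, (A - lam j • 1) ^ (t j - 1) * π j.succ ≠ 0) :
    ∀ i : ℕ,
      (∑ j : Fin p, (lam j)⁻¹ ^ i • ((A - lam j • 1) ^ i * π j.succ) = 0 ↔
        ∀ j : Fin p, t j ≤ i) := by
  intro i
  constructor
  · intro h j
    by_contra hlt
    push_neg at hlt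
    have h0 : (A - lam j • 1) ^ i * π j.succ = 0 := by
      have h' := congrArg (· * π j.succ) h
      simp only [Finset.sum_mul, Matrix.zero_mul] at h'
      rw [Finset.sum_eq_single j] at h'
      · rw [smul_mul_assoc, mul_assoc, hidem] at h'
        have hne : (lam j)⁻¹ ^ i ≠ 0 := pow_ne_zero _ (inv_ne_zero (hlam j))
        exact (smul_eq_zero.mp h').resolve_left hne
      · intro k _ hk
        rw [smul_mul_assoc, mul_assoc,
          horth _ _ ((Fin.succ_injective p).ne hk), mul_zero, smul_zero]
      · simp
    apply htnz j
    have hsplit : (A - lam j • 1) ^ (t j - 1)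
        = (A - lam j • 1) ^ (t j - 1 - i) * (A - lam j • 1) ^ i := by
      rw [← pow_add, Nat.sub_add_cancel (by omega)]
    rw [hsplit, mul_assoc, h0, mul_zero]
  · intro h
    apply Finset.sum_eq_zero
    intro j _
    have hsplit : (A - lam j • 1) ^ i
        = (A - lam j • 1) ^ (i - t j) * (A - lam j • 1) ^ (t j) := by
      rw [← pow_add, Nat.sub_add_cancel (h j)]
    rw [hsplit, mul_assoc, htz, mul_zero, smul_zero]
end

section
/- Let (λ_1,…,λ_p; π_0,π_1,…,π_p) be a spectral system for A, suppose t_0 ∈ ℕ satisfies A^{t_0}·π_0 = 0 and for each j = 1,…,p there is t_j ∈ ℕ with (A − λ_j·1)^{t_j}·π_j = 0. Then for every natural number k ≥ 1, setting S := ∑_{j=1}^{p} λ_j^k · π_j, the following hold: (i) there exist an invertible n×n matrix P and a function d : n → F such that S = P · diagonal(d) · P⁻¹; (ii) A^k − S is nilpotent; (iii) S·A^k = A^k·S. -/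
/-!
Put `c = (0, λ₁, …, λ_p)` and `s = ∑ₐ cₐ πₐ`. Since the `πₐ` are complete orthogonal idempotents,
`sᵏ = ∑ₐ cₐᵏ πₐ`, which for `k ≥ 1` is the matrix `S` of the statement, and every vector splits
as `∑ₐ πₐ v` with `πₐ v` an eigenvector of `s`; an eigenbasis diagonalizes `S`. The hypotheses
say that each block `(A - cₐ) πₐ` is nilpotent; these blocks commute pairwise, so `A - s` is
nilpotent, and as `A` commutes with `s`, `Aᵏ - sᵏ = (A - s) · (∑ᵢ Aⁱ sᵏ⁻¹⁻ⁱ)` is nilpotent too.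
-/

open Finset Matrix Module.End

section Ring

variable {R : Type*} [Ring R]

theorem Commute.isNilpotent_mul_of_pow_mul_eq_zero {x e : R} (h : Commute x e)
    (he : IsIdempotentElem e) {t : ℕ} (ht : x ^ t * e = 0) : IsNilpotent (x * e) :=
  ⟨t + 1, by rw [h.mul_pow, he.pow_succ_eq, pow_succ', mul_assoc, ht, mul_zero]⟩

theorem Commute.isNilpotent_pow_sub_pow {x y : R} (h : Commute x y) (hxy : IsNilpotent (x - y))
    (k : ℕ) : IsNilpotent (x ^ k - y ^ k) := by
  rw [← h.geom_sum₂_mul]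
  refine Commute.isNilpotent_mul_left (Commute.sum_left _ _ _ fun i _ => ?_) hxy
  exact (((Commute.refl x).sub_right h).pow_left i).mul_left
    ((h.symm.sub_right (Commute.refl y)).pow_left _)

end Ring

namespace CompleteOrthogonalIdempotents

section Algebra

variable {K R ι : Type*} [CommRing K] [Ring R] [Algebra K R] [Fintype ι] {e : ι → R}

theorem sum_smul_pow (he : CompleteOrthogonalIdempotents e) (c : ι → K) (k : ℕ) :
    (∑ i, c i • e i) ^ k = ∑ i, c i ^ k • e i := by
  classical
  induction k with
  | zero => simp [he.complete]
  | succ k ih =>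
    rw [pow_succ, ih]
    simp [Finset.sum_mul, Finset.mul_sum, he.mul_eq, smul_smul, pow_succ, mul_comm]

theorem isNilpotent_sub_sum_smul (he : CompleteOrthogonalIdempotents e) {x : R}
    (hx : ∀ i, Commute x (e i)) (c : ι → K)
    (hnil : ∀ i, IsNilpotent ((x - algebraMap K R (c i)) * e i)) :
    IsNilpotent (x - ∑ i, c i • e i) := by
  classical
  set y := fun i => x - algebraMap K R (c i)
  have hblocks : x - ∑ i, c i • e i = ∑ i, y i * e i := by
    simp only [y, sub_mul, Finset.sum_sub_distrib, ← Finset.mul_sum, he.complete, mul_one,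
      Algebra.smul_def]
  have hy : ∀ i j, Commute (y i) (e j) := fun i j => (hx j).sub_left (Algebra.commutes _ _)
  have hzero : ∀ i j, i ≠ j → y i * e i * (y j * e j) = 0 := fun i j hij => by
    rw [mul_assoc, ← mul_assoc (e i), ← (hy j i).eq, mul_assoc, he.ortho hij, mul_zero, mul_zero]
  rw [hblocks]
  refine Commute.isNilpotent_sum (fun i _ => hnil i) fun i j _ _ => ?_
  obtain rfl | hij := eq_or_ne i j
  · exact Commute.refl _
  · exact (hzero i j hij).trans (hzero j i hij.symm).symm

end Algebra

theorem iSup_eigenspace_sum_smul_eq_top {K V ι : Type*} [CommRing K] [AddCommGroup V]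
    [Module K V] [Fintype ι] {e : ι → Module.End K V} (he : CompleteOrthogonalIdempotents e)
    (c : ι → K) : ⨆ μ, eigenspace (∑ i, c i • e i) μ = ⊤ := by
  classical
  have hmem : ∀ i v, e i v ∈ eigenspace (∑ j, c j • e j) (c i) := fun i v => by
    have : (∑ j, c j • e j) * e i = c i • e i := by simp [Finset.sum_mul, he.mul_eq]
    exact mem_eigenspace_iff.mpr (LinearMap.congr_fun this v)
  refine eq_top_iff.mpr fun v _ => ?_
  have hv : v = ∑ i, e i v := by simpa using (LinearMap.congr_fun he.complete v).symm
  rw [hv]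
  exact Submodule.sum_mem _ fun i _ => Submodule.mem_iSup_of_mem (c i) (hmem i v)

end CompleteOrthogonalIdempotents

theorem Module.End.exists_basis_apply_eq_smul_of_iSup_eigenspace_eq_top {K V n : Type*}
    [Field K] [AddCommGroup V] [Module K V] [FiniteDimensional K V] (f : Module.End K V)
    (h : ⨆ μ, eigenspace f μ = ⊤) (b₀ : Module.Basis n K V) :
    ∃ (b : Module.Basis n K V) (d : n → K), ∀ i, f (b i) = d i • b i := by
  classical
  have hf := DirectSum.isInternal_submodule_of_iSupIndep_of_iSup_eq_top f.eigenspaces_iSupIndep h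
  let b := hf.collectedBasis fun μ => Module.finBasis K (eigenspace f μ)
  let e := b.indexEquiv b₀
  refine ⟨b.reindex e, fun i => (e.symm i).1, fun i => ?_⟩
  rw [Module.Basis.reindex_apply]
  exact mem_eigenspace_iff.mp (hf.collectedBasis_mem _ _)

theorem Matrix.eq_mul_diagonal_mul_inv_of_mulVec_eq_smul {K n : Type*} [Field K] [Fintype n]
    [DecidableEq n] (S : Matrix n n K) (b : Module.Basis n K (n → K)) (d : n → K)
    (hb : ∀ i, S *ᵥ b i = d i • b i) :
    S = (Pi.basisFun K n).toMatrix b * diagonal d * ((Pi.basisFun K n).toMatrix b)⁻¹ := by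
  set P := (Pi.basisFun K n).toMatrix b
  have hSP : S * P = P * diagonal d := by
    ext i j
    rw [mul_diagonal, mul_comm]
    simpa [P, Module.Basis.toMatrix_apply, mul_apply, mulVec, dotProduct] using congrFun (hb j) i
  have : Invertible P := (Pi.basisFun K n).invertibleToMatrix b
  rw [← hSP, mul_assoc, mul_inv_of_invertible, mul_one]

theorem CompleteOrthogonalIdempotents.exists_sum_smul_eq_mul_diagonal_mul_inv {K n ι : Type*}
    [Field K] [Fintype n] [DecidableEq n] [Fintype ι] {π : ι → Matrix n n K}
    (hπ : CompleteOrthogonalIdempotents π) (c : ι → K) :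
    ∃ P : Matrix n n K, IsUnit P ∧ ∃ d : n → K, ∑ i, c i • π i = P * diagonal d * P⁻¹ := by
  have h : ⨆ μ, eigenspace (∑ i, c i • toLin' (π i)) μ = ⊤ :=
    (hπ.map (toLinAlgEquiv' : Matrix n n K ≃ₐ[K] _).toRingHom).iSup_eigenspace_sum_smul_eq_top c
  simp only [← map_smul, ← map_sum] at h
  obtain ⟨b, d, hb⟩ := exists_basis_apply_eq_smul_of_iSup_eigenspace_eq_top _ h (Pi.basisFun K n)
  have : Invertible ((Pi.basisFun K n).toMatrix b) := (Pi.basisFun K n).invertibleToMatrix b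
  exact ⟨_, isUnit_of_invertible _, d, eq_mul_diagonal_mul_inv_of_mulVec_eq_smul _ b d hb⟩

theorem pow_jordan_chevalley_decomposition_general
    (F : Type*) [Field F] (n : Type*) [Fintype n] [DecidableEq n]
    (A : Matrix n n F) (p : ℕ)
    (lam : Fin p → F) (π : Fin (p + 1) → Matrix n n F)
    (hsum : ∑ a, π a = 1)
    (horth : ∀ a b, a ≠ b → π a * π b = 0)
    (hidem : ∀ a, π a * π a = π a)
    (hcomm : ∀ a, A * π a = π a * A)
    (t₀ : ℕ) (ht₀ : A ^ t₀ * π 0 = 0)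
    (t : Fin p → ℕ)
    (htz : ∀ j : Fin p, (A - lam j • 1) ^ (t j) * π j.succ = 0) :
    ∀ k : ℕ, 1 ≤ k →
      (∃ P : Matrix n n F, IsUnit P ∧ ∃ d : n → F,
          (∑ j : Fin p, lam j ^ k • π j.succ) = P * Matrix.diagonal d * P⁻¹) ∧
      IsNilpotent (A ^ k - ∑ j : Fin p, lam j ^ k • π j.succ) ∧
      (∑ j : Fin p, lam j ^ k • π j.succ) * A ^ k =
        A ^ k * ∑ j : Fin p, lam j ^ k • π j.succ := by
  intro k hk
  have hπ : CompleteOrthogonalIdempotents π := ⟨⟨hidem, horth⟩, hsum⟩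
  have hcA : ∀ a, Commute A (π a) := hcomm
  let c : Fin (p + 1) → F := Fin.cons 0 lam
  have hS : ∑ j, lam j ^ k • π j.succ = (∑ a, c a • π a) ^ k := by
    rw [hπ.sum_smul_pow]
    simp [Fin.sum_univ_succ, c, zero_pow (Nat.one_le_iff_ne_zero.mp hk)]
  have hAs : Commute A (∑ a, c a • π a) :=
    Commute.sum_right _ _ _ fun a _ => (hcA a).smul_right _
  have hblock : ∀ a s, (A - c a • 1) ^ s * π a = 0 →
      IsNilpotent ((A - algebraMap F _ (c a)) * π a) := fun a s hs =>
    ((hcA a).sub_left (Algebra.commutes _ _)).isNilpotent_mul_of_pow_mul_eq_zero (hidem a)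
      (by rwa [Algebra.algebraMap_eq_smul_one])
  have hnil : IsNilpotent (A - ∑ a, c a • π a) := hπ.isNilpotent_sub_sum_smul hcA c
    (Fin.cases (hblock 0 t₀ (by simpa [c] using ht₀)) fun j => hblock j.succ (t j) (htz j))
  rw [hS]
  exact ⟨hπ.sum_smul_pow c k ▸ hπ.exists_sum_smul_eq_mul_diagonal_mul_inv _,
    hAs.isNilpotent_pow_sub_pow hnil k, (hAs.pow_pow k k).symm.eq⟩

/-- Jordan–Chevalley-type decomposition of the powers of `A`: for `k ≥ 1`, the matrix
`S = ∑_j λ_j^k π_j` is diagonalizable, `A^k - S` is nilpotent, and `S` commutes with `A^k`. -/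
theorem pow_jordan_chevalley_decomposition
    (F : Type*) [Field F] (n : Type*) [Fintype n] [DecidableEq n] [Nonempty n]
    (A : Matrix n n F) (p : ℕ)
    (lam : Fin p → F) (π : Fin (p + 1) → Matrix n n F)
    (hlam : ∀ j, lam j ≠ 0)
    (hsum : ∑ a, π a = 1)
    (horth : ∀ a b, a ≠ b → π a * π b = 0)
    (hidem : ∀ a, π a * π a = π a)
    (hcomm : ∀ a, A * π a = π a * A)
    (t₀ : ℕ) (ht₀ : A ^ t₀ * π 0 = 0)
    (t : Fin p → ℕ)
    (htz : ∀ j : Fin p, (A - lam j • 1) ^ (t j) * π j.succ = 0) :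
    ∀ k : ℕ, 1 ≤ k →
      (∃ P : Matrix n n F, IsUnit P ∧ ∃ d : n → F,
          (∑ j : Fin p, lam j ^ k • π j.succ) = P * Matrix.diagonal d * P⁻¹) ∧
      IsNilpotent (A ^ k - ∑ j : Fin p, lam j ^ k • π j.succ) ∧
      (∑ j : Fin p, lam j ^ k • π j.succ) * A ^ k =
        A ^ k * ∑ j : Fin p, lam j ^ k • π j.succ :=
  pow_jordan_chevalley_decomposition_general F n A p lam π hsum horth hidem hcomm t₀ ht₀ t htz
end

section
/- Let F be a field, A an n×n matrix over F, p and t_0 natural numbers, λ_1,…,λ_p pairwise distinct nonzero elements of F, and t_1,…,t_p ≥ 1 natural numbers. Suppose there are n×n matrices N_0,…,N_{t_0−1} and M_{j,i} (1 ≤ j ≤ p, 0 ≤ i < t_j) over F such that for every natural number k: A^k = (N_k if k < t_0, and 0 otherwise) + ∑_{j=1}^{p} λ_j^k · ∑_{i=0}^{t_j−1} C(k,i)·M_{j,i}; suppose moreover that M_{j, t_j−1} ≠ 0 for every j, and that N_{t_0−1} ≠ 0 whenever t_0 ≥ 1. Then the minimal polynomial of A over F equals X^{t_0} · ∏_{j=1}^{p}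 (X − λ_j)^{t_j}. -/
/-!
Write `c_i(f, r)` for the coefficient of `(X - r)^i` in `f`. Since
`λ^i c_i(X^k, λ) = λ^k C(k, i)`, the hypothesis on the powers `A^k` says, by linearity, that
`aeval A f = ∑_{i<t₀} c_i(f, 0) N_i + ∑_j ∑_{i<t_j} c_i(f, λ_j) λ_j^i M_{j,i}`: `A` only sees the
jet of order `t₀` of `f` at `0` and the jets of order `t_j` at the `λ_j`. Hence
`q = X^{t₀} ∏_j (X - λ_j)^{t_j}` annihilates `A`. If `q = f (X - r)`, then `r` is one of these
roots and all jets of `f` vanish except the one at `r`, which reduces to its top term: a nonzero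
multiple of `N_{t₀-1}` or of `M_{j,t_j-1}`. So no `q / (X - r)` annihilates `A`, and as `q`
splits, `q` is the minimal polynomial.
-/

open Finset Polynomial

namespace Polynomial

section Jet

variable {R V : Type*} [CommRing R] [AddCommGroup V] [Module R V]

noncomputable def taylorJetSum (r : R) (t : ℕ) (B : ℕ → V) (f : R[X]) : V :=
  ∑ i ∈ range t, (taylor r f).coeff i • B i

theorem taylor_X_sub_C_pow_mul (r : R) (s : ℕ) (g : R[X]) :
    taylor r ((X - C r) ^ s * g) = X ^ s * taylor r g := by
  simp [taylor_mul, taylor_pow]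

theorem taylorJetSum_eq_zero_of_dvd {r : R} {t : ℕ} (B : ℕ → V) {f : R[X]}
    (h : (X - C r) ^ t ∣ f) : taylorJetSum r t B f = 0 := by
  obtain ⟨g, rfl⟩ := h
  refine sum_eq_zero fun i hi => ?_
  rw [taylor_X_sub_C_pow_mul, coeff_X_pow_mul', if_neg (by simpa using hi), zero_smul]

theorem taylorJetSum_X_sub_C_pow_mul {t : ℕ} (ht : 0 < t) (r : R) (B : ℕ → V) (g : R[X]) :
    taylorJetSum r t B ((X - C r) ^ (t - 1) * g) = g.eval r • B (t - 1) := by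
  rw [taylorJetSum, sum_eq_single_of_mem (t - 1) (by simp [ht]) fun i hi hne => ?_]
  · rw [taylor_X_sub_C_pow_mul, coeff_X_pow_mul', if_pos le_rfl, Nat.sub_self, taylor_coeff_zero]
  · rw [taylor_X_sub_C_pow_mul, coeff_X_pow_mul', if_neg (by simp at hi; omega), zero_smul]

theorem pow_mul_coeff_taylor_X_pow (r : R) (k i : ℕ) :
    r ^ i * (taylor r (X ^ k)).coeff i = r ^ k * k.choose i := by
  rw [taylor_X_pow, coeff_X_add_C_pow]
  rcases le_or_gt i k with hik | hki
  · rw [← mul_assoc, ← pow_add, Nat.add_sub_cancel' hik]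
  · simp [Nat.choose_eq_zero_of_lt hki]

theorem aeval_eq_taylorJetSum_add_sum_of_pow_eq {A ι : Type*} [Ring A] [Algebra R A]
    [Fintype ι] {x : A} {t₀ : ℕ} {lam : ι → R} {t : ι → ℕ} {N : ℕ → A} {M : ι → ℕ → A}
    (hpow : ∀ k : ℕ, x ^ k = (if k < t₀ then N k else 0) +
      ∑ j, lam j ^ k • ∑ i ∈ range (t j), (k.choose i : R) • M j i)
    (f : R[X]) :
    aeval x f = taylorJetSum 0 t₀ N f +
      ∑ j, taylorJetSum (lam j) (t j) (fun i => lam j ^ i • M j i) f := by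
  induction f using Polynomial.induction_on' with
  | add f g hf hg =>
    simp only [map_add, hf, hg, taylorJetSum, coeff_add, add_smul, sum_add_distrib]
    abel
  | monomial k a =>
    have hcoeff (r : R) (i : ℕ) :
        (taylor r (monomial k a)).coeff i = a * (taylor r (X ^ k)).coeff i := by
      rw [← C_mul_X_pow_eq_monomial, taylor_mul, taylor_C, coeff_C_mul]
    rw [aeval_monomial, ← Algebra.smul_def, hpow k, smul_add]
    congr 1
    · simp [taylorJetSum, coeff_monomial, ite_smul, sum_ite_eq]
    · rw [smul_sum]
      refine sum_congr rfl fun j _ => ?_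
      rw [taylorJetSum, smul_sum, smul_sum]
      refine sum_congr rfl fun i _ => ?_
      simp only [hcoeff, smul_smul]
      congr 1
      linear_combination -a * pow_mul_coeff_taylor_X_pow (lam j) k i

end Jet

section Minpoly

variable {K A : Type*} [Field K] [Ring A] [Algebra K A]

theorem exists_eq_of_isRoot_prod_X_sub_C_pow {ι : Type*} [Fintype ι] {μ : ι → K} {s : ι → ℕ}
    {r : K} (h : (∏ o, (X - C (μ o)) ^ s o).IsRoot r) : ∃ o, r = μ o ∧ 0 < s o := by
  simpa [IsRoot, eval_prod, prod_eq_zero_iff, pow_eq_zero_iff', sub_eq_zero, Nat.pos_iff_ne_zero]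
    using h

theorem minpoly_eq_of_forall_mul_X_sub_C {x : A} {q : K[X]} (hq : q.Monic) (hsplit : q.Splits)
    (hx : aeval x q = 0) (hmin : ∀ r f, q = f * (X - C r) → aeval x f ≠ 0) :
    minpoly K x = q := by
  obtain ⟨h, hqh⟩ := minpoly.dvd K x hx
  have hh : h.Monic := (minpoly.monic ⟨q, hq, hx⟩).of_mul_monic_left (hqh ▸ hq)
  suffices h = 1 by rw [hqh, this, mul_one]
  by_contra hne
  obtain ⟨r, hr⟩ := (hsplit.of_dvd hq.ne_zero (Dvd.intro_left _ hqh.symm)).exists_eval_eq_zero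
    fun h0 => hne (hh.degree_le_zero_iff_eq_one.mp h0.le)
  obtain ⟨g, rfl⟩ := dvd_iff_isRoot.mpr hr
  exact hmin r (minpoly K x * g) (by rw [hqh]; ring) (by simp [minpoly.aeval])

theorem minpoly_eq_prod_of_aeval_eq_sum_taylorJetSum {ι : Type*} [Fintype ι] [DecidableEq ι]
    {x : A} {μ : ι → K} (hμ : Function.Injective μ) {s : ι → ℕ} {B : ι → ℕ → A}
    (haeval : ∀ f, aeval x f = ∑ o, taylorJetSum (μ o) (s o) (B o) f)
    (hB : ∀ o, 0 < s o → B o (s o - 1) ≠ 0) :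
    minpoly K x = ∏ o, (X - C (μ o)) ^ s o := by
  set q := ∏ o, (X - C (μ o)) ^ s o with hq
  have hdvd (o : ι) : (X - C (μ o)) ^ s o ∣ q := dvd_prod_of_mem _ (mem_univ o)
  refine minpoly_eq_of_forall_mul_X_sub_C
    (monic_prod_of_monic _ _ fun o _ => (monic_X_sub_C _).pow _)
    (Splits.prod fun o _ => (Splits.X_sub_C _).pow _) ?_ fun r f hf => ?_
  · rw [haeval]
    exact sum_eq_zero fun o _ => taylorJetSum_eq_zero_of_dvd _ (hdvd o)
  obtain ⟨o, rfl, hso⟩ := exists_eq_of_isRoot_prod_X_sub_C_pow (show q.IsRoot r by simp [hf])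
  set g := ∏ o' ∈ univ.erase o, (X - C (μ o')) ^ s o'
  have hfg : f = (X - C (μ o)) ^ (s o - 1) * g := by
    refine mul_right_cancel₀ (X_sub_C_ne_zero (μ o)) ?_
    rw [← hf, hq, ← mul_prod_erase _ _ (mem_univ o), mul_right_comm, ← pow_succ,
      Nat.sub_add_cancel hso]
  have hother (o' : ι) (ho' : o' ≠ o) : (X - C (μ o')) ^ s o' ∣ f :=
    hfg ▸ (dvd_prod_of_mem _ (mem_erase.2 ⟨ho', mem_univ o'⟩)).mul_left _
  have hg : g.eval (μ o) ≠ 0 := by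
    simp [g, eval_prod, prod_eq_zero_iff, sub_eq_zero, hμ.eq_iff]
  rw [haeval, sum_eq_single o (fun o' _ ho' => taylorJetSum_eq_zero_of_dvd _ (hother o' ho'))
    (by simp), hfg, taylorJetSum_X_sub_C_pow_mul hso]
  exact smul_ne_zero hg (hB o hso)

end Minpoly

end Polynomial

theorem minpoly_from_P_canonical_form_general
    (F : Type*) [Field F] (n : Type*) [Fintype n] [DecidableEq n]
    (A : Matrix n n F) (p t₀ : ℕ)
    (lam : Fin p → F) (hlam : ∀ j, lam j ≠ 0) (hinj : Function.Injective lam)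
    (t : Fin p → ℕ)
    (N : ℕ → Matrix n n F) (M : Fin p → ℕ → Matrix n n F)
    (hpow : ∀ k : ℕ,
      A ^ k = (if k < t₀ then N k else 0) +
        ∑ j : Fin p, lam j ^ k •
          ∑ i ∈ Finset.range (t j), (k.choose i : F) • M j i)
    (hM : ∀ j : Fin p, M j (t j - 1) ≠ 0)
    (hN : 1 ≤ t₀ → N (t₀ - 1) ≠ 0) :
    minpoly F A = X ^ t₀ * ∏ j : Fin p, (X - C (lam j)) ^ (t j) := by
  -- the root `0` is indexed by `none` and the root `lam j` by `some j`
  have hμ : Function.Injective fun o : Option (Fin p) => o.elim 0 lam := by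
    rintro (_ | i) (_ | j) h
    exacts [rfl, absurd h.symm (hlam j), absurd h (hlam i), congrArg some (hinj h)]
  have hminpoly := minpoly_eq_prod_of_aeval_eq_sum_taylorJetSum hμ (x := A)
    (s := fun o => o.elim t₀ t) (B := fun o => o.elim N fun j i => lam j ^ i • M j i)
    (fun f => by simpa [Fintype.sum_option] using aeval_eq_taylorJetSum_add_sum_of_pow_eq hpow f)
    ?_
  · simpa [Fintype.prod_option] using hminpoly
  · rintro (_ | j) h
    exacts [hN h, smul_ne_zero (pow_ne_zero _ (hlam j)) (hM j)]

/-- Reading off the minimal polynomial of `A` from its `P`-canonical form: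
`minpoly F A = X^{t₀} * ∏_j (X - λ_j)^{t_j}`. -/
theorem minpoly_from_P_canonical_form
    (F : Type*) [Field F] (n : Type*) [Fintype n] [DecidableEq n] [Nonempty n]
    (A : Matrix n n F) (p t₀ : ℕ)
    (lam : Fin p → F) (hlam : ∀ j, lam j ≠ 0) (hinj : Function.Injective lam)
    (t : Fin p → ℕ) (ht1 : ∀ j, 1 ≤ t j)
    (N : ℕ → Matrix n n F) (M : Fin p → ℕ → Matrix n n F)
    (hpow : ∀ k : ℕ,
      A ^ k = (if k < t₀ then N k else 0) +
        ∑ j : Fin p, lam j ^ k •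
          ∑ i ∈ Finset.range (t j), (k.choose i : F) • M j i)
    (hM : ∀ j : Fin p, M j (t j - 1) ≠ 0)
    (hN : 1 ≤ t₀ → N (t₀ - 1) ≠ 0) :
    minpoly F A = X ^ t₀ * ∏ j : Fin p, (X - C (lam j)) ^ (t j) :=
  minpoly_from_P_canonical_form_general F n A p t₀ lam hlam hinj t N M hpow hM hN
end

section
/- Let F be a field and A an n×n matrix over F. Then A is similar over F to a diagonal matrix (i.e., there exist an invertible n×n matrix P and d : n → F with A = P · diagonal(d) · P⁻¹) if and only if there exist a natural number p, pairwise distinct nonzero elements λ_1,…,λ_p of F, and n×n matrices P_1,…,P_p over F such that A^k = ∑_{j=1}^{p} λ_j^k · P_j for every natural number k ≥ 1. -/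
/-!
If `A = P D P⁻¹` with `D` diagonal, then `A ^ k = ∑_c c ^ k • P E_c P⁻¹` for `k ≥ 1`, where `c` runs
over the nonzero diagonal entries and `E_c` is the diagonal projection onto the entries equal
to `c`; the zero entries drop out because `0 ^ k = 0`. Conversely, such an expansion gives
`q(A) = ∑_j q(λ_j) • P_j` for every polynomial `q` without constant term, so `A` is annihilated
by `∏_{μ ∈ {0, λ_1, …, λ_p}} (X - μ)`. Its roots are distinct, so the kernel of this product
is the sum of the eigenspaces, and a basis adapted to the eigenspace decomposition
diagonalizes `A`.
-/

open Finset Polynomial Module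

theorem aeval_eq_sum_eval_smul_of_pow_eq_sum {R A ι : Type*} [CommRing R] [Ring A] [Algebra R A]
    [Fintype ι] {a : A} (lam : ι → R) (Q : ι → A)
    (h : ∀ k, 1 ≤ k → a ^ k = ∑ j, lam j ^ k • Q j) {q : R[X]} (hq : q.eval 0 = 0) :
    aeval a q = ∑ j, q.eval (lam j) • Q j := by
  have hterm (k : ℕ) : q.coeff k • a ^ k = ∑ j, (q.coeff k * lam j ^ k) • Q j := by
    rcases Nat.eq_zero_or_pos k with rfl | hk
    · simp [coeff_zero_eq_eval_zero, hq]
    · simp only [h k hk, smul_sum, smul_smul]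
  simp only [aeval_eq_sum_range, hterm, eval_eq_sum_range, sum_smul]
  exact sum_comm

namespace Module.End

variable {K V : Type*} [Field K] [AddCommGroup V] [Module K V]

theorem ker_aeval_prod_X_sub_C (f : End K V) (s : Finset K) :
    LinearMap.ker (aeval f (∏ μ ∈ s, (X - C μ))) = ⨆ μ ∈ s, f.eigenspace μ := by
  classical
  induction s using Finset.induction_on with
  | empty => simp [one_eq_id]
  | insert a s ha ih =>
    have hcop : IsCoprime (X - C a) (∏ μ ∈ s, (X - C μ)) :=
      IsCoprime.prod_right fun μ hμ =>
        isCoprime_X_sub_C_of_isUnit_sub (sub_ne_zero.mpr <| by rintro rfl; exact ha hμ).isUnit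
    rw [prod_insert ha, ← sup_ker_aeval_eq_ker_aeval_mul_of_coprime f hcop, ih, Finset.iSup_insert]
    congr 1
    ext x
    simp [sub_eq_zero]

theorem iSup_eigenspace_eq_top_of_aeval_prod_eq_zero {f : End K V} (s : Finset K)
    (h : aeval f (∏ μ ∈ s, (X - C μ)) = 0) : ⨆ μ, f.eigenspace μ = ⊤ := by
  refine top_unique ?_
  calc ⊤ = LinearMap.ker (aeval f (∏ μ ∈ s, (X - C μ))) := by rw [h, LinearMap.ker_zero]
    _ = ⨆ μ ∈ s, f.eigenspace μ := ker_aeval_prod_X_sub_C f s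
    _ ≤ ⨆ μ, f.eigenspace μ := iSup₂_le fun μ _ => le_iSup f.eigenspace μ

theorem exists_basis_eigenvectors {ι : Type*} {f : End K V} (h : ⨆ μ, f.eigenspace μ = ⊤)
    (b₀ : Basis ι K V) : ∃ (b : Basis ι K V) (d : ι → K), ∀ i, f (b i) = d i • b i := by
  classical
  have hint := DirectSum.isInternal_submodule_of_iSupIndep_of_iSup_eq_top
    (eigenspaces_iSupIndep f) h
  let b := hint.collectedBasis fun μ => Free.chooseBasis K (f.eigenspace μ)
  let e := b.indexEquiv b₀
  refine ⟨b.reindex e, fun i => (e.symm i).1, fun i => ?_⟩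
  rw [Basis.reindex_apply]
  exact mem_eigenspace_iff.mp (hint.collectedBasis_mem _ _)

end Module.End

namespace Matrix

variable {n : Type*} [Fintype n] [DecidableEq n]

theorem exists_eq_mul_diagonal_mul_inv_of_aeval_prod_eq_zero {K : Type*} [Field K]
    {A : Matrix n n K} (s : Finset K) (h : aeval A (∏ μ ∈ s, (X - C μ)) = 0) :
    ∃ P : Matrix n n K, IsUnit P ∧ ∃ d : n → K, A = P * diagonal d * P⁻¹ := by
  have htop : ⨆ μ, End.eigenspace (toLin' A) μ = ⊤ := by
    refine End.iSup_eigenspace_eq_top_of_aeval_prod_eq_zero s ?_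
    change aeval (toLinAlgEquiv' A) _ = 0
    rw [aeval_algHom_apply, h, map_zero]
  obtain ⟨b, d, hb⟩ := End.exists_basis_eigenvectors htop (Pi.basisFun K n)
  set P := (Pi.basisFun K n).toMatrix b with hP
  have hPinv : P * b.toMatrix (Pi.basisFun K n) = 1 := Basis.toMatrix_mul_toMatrix_flip _ _
  have hAP : A * P = P * diagonal d := by
    ext i j
    have hbj := congr_fun (hb j) i
    simp only [toLin'_apply, mulVec, dotProduct, Pi.smul_apply, smul_eq_mul] at hbj
    rw [mul_diagonal]
    simp [hP, mul_apply, Basis.toMatrix_apply, hbj, mul_comm]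
  refine ⟨P, ⟨⟨P, _, hPinv, Basis.toMatrix_mul_toMatrix_flip _ _⟩, rfl⟩, d, ?_⟩
  calc A = A * (P * b.toMatrix (Pi.basisFun K n)) := by rw [hPinv, Matrix.mul_one]
    _ = P * diagonal d * P⁻¹ := by rw [← Matrix.mul_assoc, hAP, inv_eq_right_inv hPinv]

theorem conj_pow {R : Type*} [CommRing R] {P : Matrix n n R} (hP : IsUnit P) (M : Matrix n n R)
    (k : ℕ) : (P * M * P⁻¹) ^ k = P * M ^ k * P⁻¹ := by
  rw [← hP.unit_spec, ← coe_units_inv, Units.conj_pow]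

theorem diagonal_pow_eq_sum {R : Type*} [CommSemiring R] [DecidableEq R] (d : n → R) {k : ℕ}
    (hk : k ≠ 0) :
    diagonal d ^ k =
      ∑ c ∈ (univ.image d).erase 0, c ^ k • diagonal fun i => if d i = c then 1 else 0 := by
  rw [sum_erase _ (by simp [zero_pow hk]), diagonal_pow]
  ext i j
  by_cases hij : i = j
  · subst hij
    simp [sum_apply]
  · simp [sum_apply, hij]

theorem exists_finset_pow_conj_diagonal_eq_sum {F : Type*} [Field F] {P : Matrix n n F}
    (hP : IsUnit P) (d : n → F) :
    ∃ s : Finset F, 0 ∉ s ∧ ∃ Q : F → Matrix n n F,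
      ∀ k, 1 ≤ k → (P * diagonal d * P⁻¹) ^ k = ∑ c ∈ s, c ^ k • Q c := by
  classical
  refine ⟨(univ.image d).erase 0, notMem_erase 0 _,
    fun c => P * diagonal (fun i => if d i = c then 1 else 0) * P⁻¹, fun k hk => ?_⟩
  simp only [conj_pow hP, diagonal_pow_eq_sum d (by omega : k ≠ 0), Matrix.mul_sum,
    Matrix.sum_mul, Matrix.mul_smul, Matrix.smul_mul]

end Matrix

theorem diagonalizable_iff_purely_geometric_constant_coefficients_general
    (F : Type*) [Field F] (n : Type*) [Fintype n] [DecidableEq n]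
    (A : Matrix n n F) :
    (∃ P : Matrix n n F, IsUnit P ∧ ∃ d : n → F, A = P * Matrix.diagonal d * P⁻¹) ↔
    (∃ (p : ℕ) (lam : Fin p → F) (Pj : Fin p → Matrix n n F),
      Function.Injective lam ∧ (∀ j, lam j ≠ 0) ∧
      ∀ k : ℕ, 1 ≤ k → A ^ k = ∑ j : Fin p, lam j ^ k • Pj j) := by
  constructor
  · rintro ⟨P, hP, d, rfl⟩
    obtain ⟨s, hs0, Q, hQ⟩ := Matrix.exists_finset_pow_conj_diagonal_eq_sum hP d
    refine ⟨s.card, fun j => s.equivFin.symm j, fun j => Q (s.equivFin.symm j),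
      Subtype.val_injective.comp s.equivFin.symm.injective,
      fun j h => hs0 (h ▸ (s.equivFin.symm j).2), fun k hk => ?_⟩
    rw [hQ k hk, ← s.sum_coe_sort, ← s.equivFin.symm.sum_comp]
  · rintro ⟨p, lam, Pj, -, -, h⟩
    classical
    let s := insert 0 (univ.image lam)
    have hroot : ∀ c ∈ s, (∏ μ ∈ s, (X - C μ)).eval c = 0 := fun c hc => by
      rw [eval_prod]
      exact prod_eq_zero hc (by simp)
    have hA : aeval A (∏ μ ∈ s, (X - C μ)) = 0 := by
      rw [aeval_eq_sum_eval_smul_of_pow_eq_sum lam Pj h (hroot 0 (mem_insert_self _ _))]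
      exact sum_eq_zero fun j _ => by rw [hroot (lam j) (by simp [s]), zero_smul]
    exact Matrix.exists_eq_mul_diagonal_mul_inv_of_aeval_prod_eq_zero s hA

/-- A matrix `A` is similar over `F` to a diagonal matrix iff there are finitely many pairwise
distinct nonzero scalars `λ_j` and matrices `P_j` with `A^k = ∑_j λ_j^k • P_j` for all `k ≥ 1`. -/
theorem diagonalizable_iff_purely_geometric_constant_coefficients
    (F : Type*) [Field F] (n : Type*) [Fintype n] [DecidableEq n] [Nonempty n]
    (A : Matrix n n F) :
    (∃ P : Matrix n n F, IsUnit P ∧ ∃ d : n → F, A = P * Matrix.diagonal d * P⁻¹) ↔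
    (∃ (p : ℕ) (lam : Fin p → F) (Pj : Fin p → Matrix n n F),
      Function.Injective lam ∧ (∀ j, lam j ≠ 0) ∧
      ∀ k : ℕ, 1 ≤ k → A ^ k = ∑ j : Fin p, lam j ^ k • Pj j) :=
  diagonalizable_iff_purely_geometric_constant_coefficients_general F n A
end

section
/- Let (λ_1,…,λ_p; π_0,π_1,…,π_p) be a spectral system for A, let m ∈ ℕ satisfy (A − λ_j·1)^{m+1}·π_j = 0 for every j, and define X := ∑_{j=1}^{p} ∑_{i=0}^{m} (−1)^i·(λ_j⁻¹)^{i+1} · (A − λ_j·1)^i · π_j. Then A·X = 1 − π_0. -/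
open Finset

/-
Write `N = A - λ • 1`, so that `A = λ • (1 - x)` with `x = -λ⁻¹ • N`. The `j`-th inner sum of the
candidate is `λ⁻¹ • (∑_{i ≤ m} xⁱ) * π_j`, a truncated Neumann series for `A⁻¹`, and
`(1 - x) * ∑_{i ≤ m} xⁱ = 1 - x^(m+1)` where `x^(m+1) * π_j = 0`. Hence `A` times the `j`-th sum is
`π_j`, and summing over `j ≥ 1` gives `1 - π₀`.
-/

theorem mul_truncated_neumann_mul_eq {F R : Type*} [Field F] [Ring R] [Algebra F R]
    {A P : R} {c : F} (hc : c ≠ 0) {m : ℕ} (hP : (A - c • 1) ^ (m + 1) * P = 0) :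
    A * ∑ i ∈ range (m + 1), ((-1 : F) ^ i * c⁻¹ ^ (i + 1)) • ((A - c • 1) ^ i * P) = P := by
  set x : R := -c⁻¹ • (A - c • 1)
  have hA : A = c • (1 - x) := by
    rw [smul_sub, smul_smul, mul_neg, mul_inv_cancel₀ hc, neg_one_smul, sub_neg_eq_add,
      add_sub_cancel]
  have hterm : ∀ i, ((-1 : F) ^ i * c⁻¹ ^ (i + 1)) • ((A - c • 1) ^ i * P) =
      c⁻¹ • (x ^ i * P) := by
    intro i
    rw [smul_pow, smul_mul_assoc, smul_smul, neg_pow, pow_succ]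
    ring_nf
  have hx : x ^ (m + 1) * P = 0 := by
    rw [smul_pow, smul_mul_assoc, hP, smul_zero]
  simp_rw [hterm, ← smul_sum, ← sum_mul]
  calc A * c⁻¹ • ((∑ i ∈ range (m + 1), x ^ i) * P)
      = (1 - x) * (∑ i ∈ range (m + 1), x ^ i) * P := by
        rw [hA, mul_smul_comm, smul_mul_assoc, smul_smul, inv_mul_cancel₀ hc, one_smul, mul_assoc]
    _ = P := by rw [mul_neg_geom_sum, sub_mul, one_mul, hx, sub_zero]

theorem mul_drazin_candidate_eq_one_sub_pi_zero_general
    (F : Type*) [Field F] (n : Type*) [Fintype n] [DecidableEq n]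
    (A : Matrix n n F) (p : ℕ)
    (lam : Fin p → F) (π : Fin (p + 1) → Matrix n n F)
    (hlam : ∀ j, lam j ≠ 0)
    (hsum : ∑ a, π a = 1)
    (m : ℕ) (hm : ∀ j : Fin p, (A - lam j • 1) ^ (m + 1) * π j.succ = 0) :
    A * (∑ j : Fin p, ∑ i ∈ Finset.range (m + 1),
        ((-1 : F) ^ i * (lam j)⁻¹ ^ (i + 1)) • ((A - lam j • 1) ^ i * π j.succ)) =
      1 - π 0 := by
  rw [mul_sum, sum_congr rfl fun j _ => mul_truncated_neumann_mul_eq (hlam j) (hm j)]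
  rw [Fin.sum_univ_succ] at hsum
  exact eq_sub_of_add_eq' hsum

/-- With `X = ∑_j ∑_{i=0}^{m} (-1)^i λ_j^{-(i+1)} (A - λ_j)^i π_j` built from a spectral
system of `A`, one has `A * X = 1 - π₀`. -/
theorem mul_drazin_candidate_eq_one_sub_pi_zero
    (F : Type*) [Field F] (n : Type*) [Fintype n] [DecidableEq n] [Nonempty n]
    (A : Matrix n n F) (p : ℕ)
    (lam : Fin p → F) (π : Fin (p + 1) → Matrix n n F)
    (hlam : ∀ j, lam j ≠ 0)
    (hsum : ∑ a, π a = 1)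
    (horth : ∀ a b, a ≠ b → π a * π b = 0)
    (hidem : ∀ a, π a * π a = π a)
    (hcomm : ∀ a, A * π a = π a * A)
    (m : ℕ) (hm : ∀ j : Fin p, (A - lam j • 1) ^ (m + 1) * π j.succ = 0) :
    A * (∑ j : Fin p, ∑ i ∈ Finset.range (m + 1),
        ((-1 : F) ^ i * (lam j)⁻¹ ^ (i + 1)) • ((A - lam j • 1) ^ i * π j.succ)) =
      1 - π 0 :=
  mul_drazin_candidate_eq_one_sub_pi_zero_general F n A p lam π hlam hsum m hm
end

section
/- Let (λ_1,…,λ_p; π_0,π_1,…,π_p) be a spectral system for A, let t_0 ∈ ℕ satisfy A^{t_0}·π_0 = 0, let m ∈ ℕ satisfy (A − λ_j·1)^{m+1}·π_j = 0 for every j, and define X := ∑_{j=1}^{p} ∑_{i=0}^{m} (−1)^i·(λ_j⁻¹)^{i+1} · (A − λ_j·1)^i · π_j. Then X satisfies the three defining equations of the Drazin inverse of A: A^{t_0+1}·X = A^{t_0}, X·A·X = X, and A·X = X·A. -/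
/-!
On the range of `π_j` (`j ≥ 1`) the matrix `A = λ_j + N_j` has nilpotent part `N_j = A - λ_j`,
so the truncated Neumann series `∑_{i ≤ m} (-1)^i λ_j^{-(i+1)} N_j^i` inverts `A` there; hence
`A X = π_1 + ⋯ + π_p = 1 - π_0`. Everything follows from this and `X π_0 = 0`:
`A^{t₀+1} X = A^{t₀} - A^{t₀} π_0` and `X A X = X - X π_0`.
-/

open Finset

namespace Drazin

variable {F R : Type*} [Field F] [Ring R] [Algebra F R]

def neumannInv (A : R) (lam : F) (m : ℕ) (P : R) : R :=
  ∑ i ∈ range (m + 1), ((-1 : F) ^ i * lam⁻¹ ^ (i + 1)) • ((A - lam • 1) ^ i * P)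

theorem mul_neumannInv {A : R} {lam : F} {m : ℕ} {P : R} (hlam : lam ≠ 0)
    (hm : (A - lam • 1) ^ (m + 1) * P = 0) : A * neumannInv A lam m P = P := by
  rw [neumannInv, mul_sum]
  set N := A - lam • 1
  let f : ℕ → R := fun i => ((-1 : F) ^ i * lam⁻¹ ^ i) • (N ^ i * P)
  have telescope :
      ∀ i, A * (((-1 : F) ^ i * lam⁻¹ ^ (i + 1)) • (N ^ i * P)) = f i - f (i + 1) := by
    intro i
    rw [show A = N + lam • 1 by simp [N], add_mul, mul_smul_comm, smul_mul_assoc,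
      ← mul_assoc, ← pow_succ', one_mul, smul_smul]
    match_scalars
    · ring
    · linear_combination (-1 : F) ^ i * lam⁻¹ ^ i * mul_inv_cancel₀ hlam
  simp only [telescope, sum_range_sub', f, hm]
  simp

theorem commute_neumannInv {A P : R} (lam : F) (m : ℕ) (h : Commute A P) :
    Commute A (neumannInv A lam m P) :=
  Commute.sum_right _ _ _ fun i _ =>
    ((((Commute.refl A).sub_right ((Commute.one_right A).smul_right lam)).pow_right i).mul_right
      h).smul_right _

theorem neumannInv_mul (A : R) (lam : F) (m : ℕ) (P Q : R) :
    neumannInv A lam m P * Q = neumannInv A lam m (P * Q) := by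
  simp only [neumannInv, sum_mul, smul_mul_assoc, mul_assoc]

theorem neumannInv_zero (A : R) (lam : F) (m : ℕ) : neumannInv A lam m 0 = 0 := by
  simp [neumannInv]

end Drazin

open Drazin in
theorem drazin_candidate_satisfies_drazin_equations_general
    (F : Type*) [Field F] (n : Type*) [Fintype n] [DecidableEq n]
    (A : Matrix n n F) (p : ℕ)
    (lam : Fin p → F) (π : Fin (p + 1) → Matrix n n F)
    (hlam : ∀ j, lam j ≠ 0)
    (hsum : ∑ a, π a = 1)
    (horth : ∀ a b, a ≠ b → π a * π b = 0)
    (hcomm : ∀ a, A * π a = π a * A)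
    (t₀ : ℕ) (ht₀ : A ^ t₀ * π 0 = 0)
    (m : ℕ) (hm : ∀ j : Fin p, (A - lam j • 1) ^ (m + 1) * π j.succ = 0) :
    A ^ (t₀ + 1) * (∑ j : Fin p, ∑ i ∈ Finset.range (m + 1),
        ((-1 : F) ^ i * (lam j)⁻¹ ^ (i + 1)) • ((A - lam j • 1) ^ i * π j.succ)) = A ^ t₀ ∧
    (∑ j : Fin p, ∑ i ∈ Finset.range (m + 1),
        ((-1 : F) ^ i * (lam j)⁻¹ ^ (i + 1)) • ((A - lam j • 1) ^ i * π j.succ)) * A *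
      (∑ j : Fin p, ∑ i ∈ Finset.range (m + 1),
        ((-1 : F) ^ i * (lam j)⁻¹ ^ (i + 1)) • ((A - lam j • 1) ^ i * π j.succ)) =
      (∑ j : Fin p, ∑ i ∈ Finset.range (m + 1),
        ((-1 : F) ^ i * (lam j)⁻¹ ^ (i + 1)) • ((A - lam j • 1) ^ i * π j.succ)) ∧
    A * (∑ j : Fin p, ∑ i ∈ Finset.range (m + 1),
        ((-1 : F) ^ i * (lam j)⁻¹ ^ (i + 1)) • ((A - lam j • 1) ^ i * π j.succ)) =
      (∑ j : Fin p, ∑ i ∈ Finset.range (m + 1),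
        ((-1 : F) ^ i * (lam j)⁻¹ ^ (i + 1)) • ((A - lam j • 1) ^ i * π j.succ)) * A := by
  rw [show (∑ j : Fin p, ∑ i ∈ Finset.range (m + 1), ((-1 : F) ^ i * (lam j)⁻¹ ^ (i + 1)) •
      ((A - lam j • 1) ^ i * π j.succ)) = ∑ j, neumannInv A (lam j) m (π j.succ) from rfl]
  set X := ∑ j, neumannInv A (lam j) m (π j.succ)
  have hAX : A * X = 1 - π 0 := by
    rw [mul_sum, eq_sub_iff_add_eq', ← hsum, Fin.sum_univ_succ]
    simp only [fun j => mul_neumannInv (hlam j) (hm j)]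
  have hXπ₀ : X * π 0 = 0 := by
    simp only [X, sum_mul, neumannInv_mul, fun j : Fin p => horth _ 0 j.succ_ne_zero,
      neumannInv_zero, sum_const_zero]
  refine ⟨?_, ?_, ?_⟩
  · rw [pow_succ, mul_assoc, hAX, mul_sub, mul_one, ht₀, sub_zero]
  · rw [mul_assoc, hAX, mul_sub, mul_one, hXπ₀, sub_zero]
  · exact Commute.sum_right _ _ _ fun j _ => commute_neumannInv _ _ (hcomm j.succ)

/-- The matrix `X = ∑_j ∑_{i=0}^{m} (-1)^i λ_j^{-(i+1)} (A - λ_j)^i π_j` satisfies the three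
defining equations of the Drazin inverse of `A`:
`A^{t₀+1} X = A^{t₀}`, `X A X = X`, and `A X = X A`. -/
theorem drazin_candidate_satisfies_drazin_equations
    (F : Type*) [Field F] (n : Type*) [Fintype n] [DecidableEq n] [Nonempty n]
    (A : Matrix n n F) (p : ℕ)
    (lam : Fin p → F) (π : Fin (p + 1) → Matrix n n F)
    (hlam : ∀ j, lam j ≠ 0)
    (hsum : ∑ a, π a = 1)
    (horth : ∀ a b, a ≠ b → π a * π b = 0)
    (hidem : ∀ a, π a * π a = π a)
    (hcomm : ∀ a, A * π a = π a * A)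
    (t₀ : ℕ) (ht₀ : A ^ t₀ * π 0 = 0)
    (m : ℕ) (hm : ∀ j : Fin p, (A - lam j • 1) ^ (m + 1) * π j.succ = 0) :
    A ^ (t₀ + 1) * (∑ j : Fin p, ∑ i ∈ Finset.range (m + 1),
        ((-1 : F) ^ i * (lam j)⁻¹ ^ (i + 1)) • ((A - lam j • 1) ^ i * π j.succ)) = A ^ t₀ ∧
    (∑ j : Fin p, ∑ i ∈ Finset.range (m + 1),
        ((-1 : F) ^ i * (lam j)⁻¹ ^ (i + 1)) • ((A - lam j • 1) ^ i * π j.succ)) * A *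
      (∑ j : Fin p, ∑ i ∈ Finset.range (m + 1),
        ((-1 : F) ^ i * (lam j)⁻¹ ^ (i + 1)) • ((A - lam j • 1) ^ i * π j.succ)) =
      (∑ j : Fin p, ∑ i ∈ Finset.range (m + 1),
        ((-1 : F) ^ i * (lam j)⁻¹ ^ (i + 1)) • ((A - lam j • 1) ^ i * π j.succ)) ∧
    A * (∑ j : Fin p, ∑ i ∈ Finset.range (m + 1),
        ((-1 : F) ^ i * (lam j)⁻¹ ^ (i + 1)) • ((A - lam j • 1) ^ i * π j.succ)) =
      (∑ j : Fin p, ∑ i ∈ Finset.range (m + 1),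
        ((-1 : F) ^ i * (lam j)⁻¹ ^ (i + 1)) • ((A - lam j • 1) ^ i * π j.succ)) * A :=
  drazin_candidate_satisfies_drazin_equations_general F n A p lam π hlam hsum horth hcomm t₀ ht₀ m
    hm
end

section
/- Let (λ_1,…,λ_p; π_0,π_1,…,π_p) be a spectral system for A, let m ∈ ℕ satisfy (A − λ_j·1)^{m+1}·π_j = 0 for every j, and define X := ∑_{j=1}^{p} ∑_{i=0}^{m} (−1)^i·(λ_j⁻¹)^{i+1} · (A − λ_j·1)^i · π_j. Then for every natural number k ≥ 1: X^k = ∑_{j=1}^{p} ∑_{i=0}^{m} (−1)^i · C(k+i−1, i) · (λ_j⁻¹)^{k+i} · (A − λ_j·1)^i · π_j. (Equivalently, the k-th power of the Drazin inverse of A is obtained by substituting −k for k in the geometric part of the P-canonical form of A, since C(−k,i) = (−1)^i C(k+i−1,i).) -/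
/-!
On the range of `π_j` the matrix `N = A - λ_j` satisfies `N^(m+1) = 0`, so evaluating a power
series at `N` (truncated after degree `m`) and cutting down by `π_j` is multiplicative. The
summand of `X` on `π_j` is the evaluation of the Taylor series of `z⁻¹` at `z = λ_j`, namely
`μ/(1 + μ t)` with `μ = λ_j⁻¹`, whose `k`-th power `μ^k (1 + μ t)^(-k)` has the coefficients
`(-1)^i C(k+i-1, i) μ^(k+i)`. Since the `π_j` are orthogonal idempotents commuting with `A`, the
cross terms of `X^k` vanish.
-/

open Finset
open scoped Polynomial

theorem Commute.aeval_left {S R : Type*} [CommRing S] [Ring R] [Algebra S R] {N e : R}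
    (h : Commute N e) (P : S[X]) : Commute (Polynomial.aeval N P) e := by
  induction P using Polynomial.induction_on' with
  | add p q hp hq => rw [map_add]; exact hp.add_left hq
  | monomial n a =>
    rw [Polynomial.aeval_monomial]
    exact (Algebra.commute_algebraMap_left a e).mul_left (h.pow_left n)

theorem Finset.sum_pow_succ_of_mul_eq_zero {ι R : Type*} [Semiring R] (s : Finset ι) (x : ι → R)
    (hx : ∀ i ∈ s, ∀ j ∈ s, i ≠ j → x i * x j = 0) (k : ℕ) :
    (∑ i ∈ s, x i) ^ (k + 1) = ∑ i ∈ s, x i ^ (k + 1) := by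
  induction k with
  | zero => simp only [zero_add, pow_one]
  | succ k ih =>
    rw [pow_succ, ih, sum_mul_sum]
    refine sum_congr rfl fun i hi => ?_
    rw [sum_eq_single_of_mem i hi fun j hj hji => ?_, ← pow_succ]
    rw [pow_succ, mul_assoc, hx i hi j hj hji.symm, mul_zero]

namespace PowerSeries

section Coefficients

variable {S : Type*} [CommRing S]

/- `μ • rescale (-μ) (mk 1) = μ / (1 + μ X)` is the Taylor series of `z⁻¹` at `z = μ⁻¹`. -/
theorem coeff_smul_rescale_neg_mk_one (μ : S) (i : ℕ) :
    coeff i (μ • rescale (-μ) (mk 1 : S⟦X⟧)) = (-1) ^ i * μ ^ (i + 1) := by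
  rw [coeff_smul, coeff_rescale, coeff_mk, Pi.one_apply, neg_pow]
  ring

theorem coeff_smul_rescale_neg_mk_one_pow_succ (μ : S) (k i : ℕ) :
    coeff i ((μ • rescale (-μ) (mk 1 : S⟦X⟧)) ^ (k + 1)) =
      (-1) ^ i * ((k + i).choose i : S) * μ ^ (k + 1 + i) := by
  rw [smul_pow, ← map_pow, mk_one_pow_eq_mk_choose_add, coeff_smul, coeff_rescale, coeff_mk,
    Nat.choose_symm_add, neg_pow]
  ring

end Coefficients

section TruncAeval

variable {S R : Type*} [CommRing S] [Ring R] [Algebra S R]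

noncomputable def truncAeval (N e : R) (m : ℕ) (f : S⟦X⟧) : R :=
  Polynomial.aeval N (trunc (m + 1) f) * e

variable {N e : R} {m : ℕ}

theorem truncAeval_eq_sum (f : S⟦X⟧) :
    truncAeval N e m f = ∑ i ∈ range (m + 1), coeff i f • (N ^ i * e) := by
  rw [truncAeval, Polynomial.aeval_eq_sum_range' (natDegree_trunc_lt f m), sum_mul]
  refine sum_congr rfl fun i hi => ?_
  rw [coeff_trunc, if_pos (mem_range.mp hi), smul_mul_assoc]

theorem aeval_mul_eq_zero_of_X_pow_dvd (hN : N ^ (m + 1) * e = 0) {P : S[X]}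
    (hP : Polynomial.X ^ (m + 1) ∣ P) : Polynomial.aeval N P * e = 0 := by
  obtain ⟨Q, rfl⟩ := hP
  rw [mul_comm, map_mul, map_pow, Polynomial.aeval_X, mul_assoc, hN, mul_zero]

theorem aeval_trunc_coe_mul (hN : N ^ (m + 1) * e = 0) (P : S[X]) :
    Polynomial.aeval N (trunc (m + 1) (P : S⟦X⟧)) * e = Polynomial.aeval N P * e := by
  rw [← sub_eq_zero, ← sub_mul, ← map_sub]
  refine aeval_mul_eq_zero_of_X_pow_dvd hN (Polynomial.X_pow_dvd_iff.mpr fun d hd => ?_)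
  rw [Polynomial.coeff_sub, coeff_trunc, if_pos hd, Polynomial.coeff_coe, sub_self]

theorem truncAeval_mul (hNe : Commute N e) (he : e * e = e) (hN : N ^ (m + 1) * e = 0)
    (f g : S⟦X⟧) : truncAeval N e m (f * g) = truncAeval N e m f * truncAeval N e m g := by
  rw [truncAeval, ← trunc_trunc_mul_trunc, ← Polynomial.coe_mul, aeval_trunc_coe_mul hN, map_mul,
    truncAeval, truncAeval, mul_assoc, mul_assoc, ← mul_assoc e, (hNe.aeval_left _).eq.symm,
    mul_assoc, he]

theorem truncAeval_pow_succ (hNe : Commute N e) (he : e * e = e) (hN : N ^ (m + 1) * e = 0)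
    (f : S⟦X⟧) (k : ℕ) : truncAeval N e m (f ^ (k + 1)) = truncAeval N e m f ^ (k + 1) := by
  induction k with
  | zero => rw [zero_add, pow_one, pow_one]
  | succ k ih => rw [pow_succ, truncAeval_mul hNe he hN, ih, ← pow_succ]

theorem truncAeval_mul_truncAeval_eq_zero {N' e' : R} {m' : ℕ} (hN'e : Commute N' e)
    (he : e * e' = 0) (f g : S⟦X⟧) : truncAeval N e m f * truncAeval N' e' m' g = 0 := by
  rw [truncAeval, truncAeval, mul_assoc, ← mul_assoc e, (hN'e.aeval_left _).eq.symm, mul_assoc,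
    he, mul_zero, mul_zero]

end TruncAeval

end PowerSeries

open PowerSeries in
theorem drazin_candidate_pow_eq_general
    (F : Type*) [Field F] (n : Type*) [Fintype n] [DecidableEq n]
    (A : Matrix n n F) (p : ℕ)
    (lam : Fin p → F) (π : Fin (p + 1) → Matrix n n F)
    (horth : ∀ a b, a ≠ b → π a * π b = 0)
    (hidem : ∀ a, π a * π a = π a)
    (hcomm : ∀ a, A * π a = π a * A)
    (m : ℕ) (hm : ∀ j : Fin p, (A - lam j • 1) ^ (m + 1) * π j.succ = 0) :
    ∀ k : ℕ, 1 ≤ k →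
      (∑ j : Fin p, ∑ i ∈ Finset.range (m + 1),
          ((-1 : F) ^ i * (lam j)⁻¹ ^ (i + 1)) • ((A - lam j • 1) ^ i * π j.succ)) ^ k =
        ∑ j : Fin p, ∑ i ∈ Finset.range (m + 1),
          ((-1 : F) ^ i * ((k + i - 1).choose i : F) * (lam j)⁻¹ ^ (k + i)) •
            ((A - lam j • 1) ^ i * π j.succ) := by
  intro k hk
  obtain ⟨k, rfl⟩ := Nat.exists_eq_add_of_le' hk
  have hNπ (a : Fin (p + 1)) (j : Fin p) : Commute (A - lam j • 1) (π a) :=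
    Commute.sub_left (hcomm a) ((Commute.one_left _).smul_left _)
  let x (j : Fin p) : F⟦X⟧ := (lam j)⁻¹ • rescale (-(lam j)⁻¹) (mk 1)
  calc _ = (∑ j, truncAeval (A - lam j • 1) (π j.succ) m (x j)) ^ (k + 1) := by
        simp only [truncAeval_eq_sum, x, coeff_smul_rescale_neg_mk_one]
    _ = ∑ j, truncAeval (A - lam j • 1) (π j.succ) m (x j ^ (k + 1)) := by
        rw [sum_pow_succ_of_mul_eq_zero _ _ fun i _ j _ hij => truncAeval_mul_truncAeval_eq_zero
          (hNπ _ j) (horth _ _ ((Fin.succ_injective _).ne hij)) _ _]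
        simp only [truncAeval_pow_succ (hNπ _ _) (hidem _) (hm _)]
    _ = _ := by
        simp only [truncAeval_eq_sum, x, coeff_smul_rescale_neg_mk_one_pow_succ,
          add_right_comm k 1, Nat.add_sub_cancel]

/-- The powers of the Drazin inverse of `A` are obtained by substituting `-k` for `k` in the
geometric part of the `P`-canonical form of `A`: for `k ≥ 1`,
`X^k = ∑_j ∑_{i=0}^{m} (-1)^i C(k+i-1,i) λ_j^{-(k+i)} (A - λ_j)^i π_j`. -/
theorem drazin_candidate_pow_eq
    (F : Type*) [Field F] (n : Type*) [Fintype n] [DecidableEq n] [Nonempty n]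
    (A : Matrix n n F) (p : ℕ)
    (lam : Fin p → F) (π : Fin (p + 1) → Matrix n n F)
    (hlam : ∀ j, lam j ≠ 0)
    (hsum : ∑ a, π a = 1)
    (horth : ∀ a b, a ≠ b → π a * π b = 0)
    (hidem : ∀ a, π a * π a = π a)
    (hcomm : ∀ a, A * π a = π a * A)
    (m : ℕ) (hm : ∀ j : Fin p, (A - lam j • 1) ^ (m + 1) * π j.succ = 0) :
    ∀ k : ℕ, 1 ≤ k →
      (∑ j : Fin p, ∑ i ∈ Finset.range (m + 1),
          ((-1 : F) ^ i * (lam j)⁻¹ ^ (i + 1)) • ((A - lam j • 1) ^ i * π j.succ)) ^ k =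
        ∑ j : Fin p, ∑ i ∈ Finset.range (m + 1),
          ((-1 : F) ^ i * ((k + i - 1).choose i : F) * (lam j)⁻¹ ^ (k + i)) •
            ((A - lam j • 1) ^ i * π j.succ) :=
  drazin_candidate_pow_eq_general F n A p lam π horth hidem hcomm m hm
end
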